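/- If f: ℂ^g → ℂ is entire, nowhere zero, and satisfies the theta quasi-periodicity f(z + N + TM) = exp(−πi(M,TM) − 2πi(M,z)) f(z) for all N,M ∈ ℤ^g, with g ≥ 1 and Im T positive definite, then a contradiction arises; i.e., the theta function Θ must have zeros. -/

import Mathlib

/-!
A nowhere-vanishing continuous function `f` on the simply connected space `ℂ^g` has a continuous
logarithm `h`, because `exp : ℂ → ℂ \ {0}` is a covering map. Quasi-periodicity then makes
`h (z + λ) - h z` minus the exponent of the factor of `λ` a continuous function with values in
`2πiℤ`, hence constant. Computing `h (z + e_j + T e_j)` in the two possible orders shows that the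
exponent `-πi T_jj - 2πi z_j` of the factor of `T e_j` must be `e_j`-periodic, but it changes
by `-2πi`.
-/

open Complex Finset
open scoped Real

theorem Complex.sub_eq_sub_of_exp_eq {X : Type*} [TopologicalSpace X] [PreconnectedSpace X]
    {φ ψ : X → ℂ} (hφ : Continuous φ) (hψ : Continuous ψ) (h : ∀ x, exp (φ x) = exp (ψ x))
    (x y : X) : φ x - ψ x = φ y - ψ y := by
  refine isPreconnected_univ.constant_of_mapsTo
    (isDiscrete_iff_discreteTopology.mpr
      (NormedSpace.discreteTopology_zmultiples (2 * π * I)))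
    (hφ.sub hψ).continuousOn (fun z _ => ?_) trivial trivial
  obtain ⟨n, hn⟩ := exp_eq_exp_iff_exists_int.mp (h z)
  exact AddSubgroup.mem_zmultiples_iff.mpr ⟨n, by rw [Pi.sub_apply, hn, zsmul_eq_mul]; ring⟩

theorem Complex.exists_continuous_exp_eq {X : Type*} [TopologicalSpace X]
    [SimplyConnectedSpace X] [LocallyPathConnectedSpace X] {f : X → ℂ} (hf : Continuous f)
    (hf₀ : ∀ x, f x ≠ 0) : ∃ h : X → ℂ, Continuous h ∧ ∀ x, exp (h x) = f x := by
  obtain ⟨x₀⟩ : Nonempty X := inferInstance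
  obtain ⟨h, ⟨-, hh⟩, -⟩ := isCoveringMapOn_exp.existsUnique_continuousMap_lifts ⟨f, hf⟩
    (exp_log (hf₀ x₀)) hf₀
  exact ⟨h, h.continuous, congrFun hh⟩

theorem Function.Periodic.periodic_of_exp_mul {E : Type*} [AddCommSemigroup E]
    [TopologicalSpace E] [ContinuousAdd E] [SimplyConnectedSpace E] [LocallyPathConnectedSpace E]
    {f φ : E → ℂ} {u v : E} (hf : Continuous f) (hf₀ : ∀ z, f z ≠ 0) (hφ : Continuous φ)
    (hu : Function.Periodic f u) (hv : ∀ z, f (z + v) = exp (φ z) * f z) :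
    Function.Periodic φ u := by
  obtain ⟨h, hh, hexp⟩ := exists_continuous_exp_eq hf hf₀
  have hshift : ∀ w : E, Continuous fun z => h (z + w) := fun w => hh.comp (continuous_add_const w)
  obtain ⟨z₀⟩ : Nonempty E := inferInstance
  have hu' : ∀ z, h (z + u) - h z = h (z₀ + u) - h z₀ := fun z =>
    sub_eq_sub_of_exp_eq (hshift u) hh (fun z => by rw [hexp, hexp, hu]) z z₀
  have hv' : ∀ z, h (z + v) - (φ z + h z) = h (z₀ + v) - (φ z₀ + h z₀) := fun z =>
    sub_eq_sub_of_exp_eq (hshift v) (hφ.add hh)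
      (fun z => by rw [hexp, Pi.add_apply, exp_add, hexp, hv]) z z₀
  intro z
  have huv := hu' (z + v)
  rw [add_right_comm] at huv
  linear_combination hv' z - hv' (z + u) + huv - hu' z

section ThetaFactor

variable {ι : Type*} [Fintype ι]

/-- The exponent of the theta automorphy factor of the lattice vector `N + T M`. -/
noncomputable def thetaExponent (T : Matrix ι ι ℂ) (M : ι → ℤ) (z : ι → ℂ) : ℂ :=
  -(π * I) * (∑ α, ∑ β, (M α : ℂ) * T α β * (M β : ℂ)) - 2 * π * I * ∑ α, (M α : ℂ) * z α

theorem continuous_thetaExponent (T : Matrix ι ι ℂ) (M : ι → ℤ) :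
    Continuous (thetaExponent T M) := by
  unfold thetaExponent
  fun_prop

theorem thetaExponent_add (T : Matrix ι ι ℂ) (M : ι → ℤ) (z w : ι → ℂ) :
    thetaExponent T M (z + w) = thetaExponent T M z - 2 * π * I * ∑ α, (M α : ℂ) * w α := by
  simp only [thetaExponent, Pi.add_apply, mul_add, sum_add_distrib]
  ring

end ThetaFactor

theorem no_nonvanishing_theta_quasiperiodic_general (g : ℕ) (hg : 1 ≤ g)
    (T : Matrix (Fin g) (Fin g) ℂ) :
    ¬ ∃ f : (Fin g → ℂ) → ℂ, Differentiable ℂ f ∧ (∀ z, f z ≠ 0) ∧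
      (∀ (z : Fin g → ℂ) (N M : Fin g → ℤ),
        f (fun α => z α + (N α : ℂ) + ∑ β, T α β * (M β : ℂ)) =
          Complex.exp (-(Real.pi * I) * (∑ α, ∑ β, (M α : ℂ) * T α β * (M β : ℂ)) -
            2 * Real.pi * I * ∑ α, (M α : ℂ) * z α) * f z) := by
  rintro ⟨f, hf, hf₀, hq⟩
  let e : Fin g → ℤ := Pi.single ⟨0, hg⟩ 1
  have hper : Function.Periodic f (fun α => (e α : ℂ)) := fun z => by
    simpa [Pi.add_def] using hq z e 0
  have hquasi : ∀ z, f (z + fun α => ∑ β, T α β * (e β : ℂ)) = exp (thetaExponent T e z) * f z :=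
    fun z => by simpa [thetaExponent, Pi.add_def, add_assoc] using hq z 0 e
  have h := hper.periodic_of_exp_mul hf.continuous hf₀ (continuous_thetaExponent T e) hquasi 0
  rw [thetaExponent_add, sub_eq_self] at h
  simp [e, Pi.single_apply, Real.pi_ne_zero] at h

/-- no entire nowhere-vanishing function satisfies the theta
quasi-periodicity; hence the theta function must have zeros. -/
theorem no_nonvanishing_theta_quasiperiodic (g : ℕ) (hg : 1 ≤ g)
    (T : Matrix (Fin g) (Fin g) ℂ) (hsym : ∀ α β, T α β = T β α)
    (hpos : ∀ v : Fin g → ℝ, v ≠ 0 → 0 < ∑ α, ∑ β, (T α β).im * v α * v β) :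
    ¬ ∃ f : (Fin g → ℂ) → ℂ, Differentiable ℂ f ∧ (∀ z, f z ≠ 0) ∧
      (∀ (z : Fin g → ℂ) (N M : Fin g → ℤ),
        f (fun α => z α + (N α : ℂ) + ∑ β, T α β * (M β : ℂ)) =
          Complex.exp (-(Real.pi * I) * (∑ α, ∑ β, (M α : ℂ) * T α β * (M β : ℂ)) -
            2 * Real.pi * I * ∑ α, (M α : ℂ) * z α) * f z) :=
  no_nonvanishing_theta_quasiperiodic_general g hg T
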